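/- For every integer k ≥ 3 there exists a constant C > 0, depending only on k, such that for all real t ≥ 0, L ≥ 0, integers N ≥ 1, and every k-times continuously differentiable 1-periodic function u : ℝ → ℝ with |u^{(k)}(s)| ≤ L for all s ∈ ℝ, the integrated estimator u_N(t) := ∫_0^t u̇_N(s) ds (where u̇_N(s) := −2√2π Σ_{n=1}^{N−1} n·x_n^s(s)) satisfies |(u(t) − u(0)) − u_N(t)| ≤ C · L · t / N^{k−2}. -/

import Mathlib

/-!
Let `ĝ m` be the Fourier coefficients of `u'` on `[0, 1]`. Integrating by parts `k` times gives
`|ĝ m| ≤ L / (2π|m|) ^ (k - 1)`, so for `k ≥ 3` the Fourier series of `u'` converges absolutely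
to `u'`. Grouping the modes `±n` and shifting the window `[0, 1]` to `[s - 1, s]` by periodicity,
`ĝ n e^{2πins} + ĝ (-n) e^{-2πins} = -2√2π n x_n^s(s)`, so `u̇_N(s)` is a partial sum of this
series and `|u'(s) - u̇_N(s)| ≤ ∑_{n ≥ N} 2L / n ^ (k - 1) ≤ 4L / N ^ (k - 2)`. Integrating over
`[0, t]` gives the claim with `C = 4`.
-/

open Real MeasureTheory
open scoped Interval

theorem Function.Periodic.deriv {f : ℝ → ℝ} {c : ℝ} (hf : Function.Periodic f c) :
    Function.Periodic (deriv f) c := fun x => by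
  rw [← deriv_comp_add_const, hf.funext]

section FourierCoeffOn

variable {a b : ℝ} (hab : a < b)

theorem fourierCoeffOn_of_hasDerivAt_of_eq {f f' : ℝ → ℂ}
    (hf : ∀ x ∈ [[a, b]], HasDerivAt f (f' x) x) (hf' : IntervalIntegrable f' volume a b)
    (hfab : f b = f a) (n : ℤ) :
    fourierCoeffOn hab f' n = 2 * π * Complex.I * n / (b - a) * fourierCoeffOn hab f n := by
  have hba : (b - a : ℂ) ≠ 0 := by exact_mod_cast (sub_pos.mpr hab).ne'
  rcases eq_or_ne n 0 with rfl | hn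
  · rw [fourierCoeffOn_eq_integral]
    simp only [neg_zero, fourier_zero, one_smul, Int.cast_zero, mul_zero, zero_div, zero_mul,
      intervalIntegral.integral_eq_sub_of_hasDerivAt hf hf', hfab, sub_self, smul_zero]
  · rw [fourierCoeffOn_of_hasDerivAt hab hn hf hf', hfab, sub_self, mul_zero, zero_sub]
    have : (n : ℂ) ≠ 0 := by exact_mod_cast hn
    field_simp

theorem fourierCoeffOn_deriv {u : ℝ → ℝ} (hu : ContDiff ℝ 1 u)
    (hper : Function.Periodic u (b - a)) (n : ℤ) :
    fourierCoeffOn hab (fun x => ((deriv u x : ℝ) : ℂ)) n =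
      2 * π * Complex.I * n / (b - a) * fourierCoeffOn hab (fun x => ((u x : ℝ) : ℂ)) n :=
  fourierCoeffOn_of_hasDerivAt_of_eq hab
    (fun x _ => ((hu.differentiable one_ne_zero x).hasDerivAt).ofReal_comp)
    ((Complex.continuous_ofReal.comp (hu.continuous_deriv le_rfl)).intervalIntegrable a b)
    (by simpa using congrArg Complex.ofReal (hper a)) n

theorem fourierCoeffOn_iteratedDeriv {k : ℕ} {u : ℝ → ℝ} (hu : ContDiff ℝ k u)
    (hper : Function.Periodic u (b - a)) (n : ℤ) :
    fourierCoeffOn hab (fun x => ((iteratedDeriv k u x : ℝ) : ℂ)) n =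
      (2 * π * Complex.I * n / (b - a)) ^ k * fourierCoeffOn hab (fun x => ((u x : ℝ) : ℂ)) n := by
  induction k generalizing u with
  | zero => simp
  | succ k ih =>
    have hu' : ContDiff ℝ (k + 1) u := by exact_mod_cast hu
    rw [iteratedDeriv_succ', ih (contDiff_succ_iff_deriv.mp hu').2.2 hper.deriv,
      fourierCoeffOn_deriv hab (hu.of_le (by exact_mod_cast k.succ_pos)) hper]
    ring

theorem norm_fourierCoeffOn_le {f : ℝ → ℂ} {L : ℝ} (hf : ∀ x ∈ Set.Ioc a b, ‖f x‖ ≤ L) (n : ℤ) :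
    ‖fourierCoeffOn hab f n‖ ≤ L := by
  have hba : 0 < b - a := sub_pos.mpr hab
  have hint := intervalIntegral.norm_integral_le_of_norm_le_const (a := a) (b := b)
    (f := fun x => fourier (-n) (x : AddCircle (b - a)) • f x) (C := L) fun x hx => by
      rw [norm_smul, fourier_apply, Circle.norm_coe, one_mul]
      exact hf x (Set.uIoc_of_le hab.le ▸ hx)
  rw [abs_of_pos hba] at hint
  rw [fourierCoeffOn_eq_integral, norm_smul, Real.norm_of_nonneg (by positivity)]
  calc 1 / (b - a) * ‖_‖ ≤ 1 / (b - a) * (L * (b - a)) := by gcongr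
    _ = L := by field_simp

theorem hasSum_fourierCoeffOn_smul_fourier {f : ℝ → ℂ} (hf : Continuous f)
    (hper : Function.Periodic f (b - a)) (hsum : Summable (fourierCoeffOn hab f)) (x : ℝ) :
    HasSum (fun n => fourierCoeffOn hab f n • fourier n (x : AddCircle (b - a))) (f x) := by
  have : Fact (0 < b - a) := ⟨sub_pos.mpr hab⟩
  let F : C(AddCircle (b - a), ℂ) := ⟨hper.lift, hf.quotient_liftOn' _⟩
  have hF : fourierCoeff F = fourierCoeffOn hab f := by
    ext n
    rw [fourierCoeff_eq_intervalIntegral _ _ a, fourierCoeffOn_eq_integral, add_sub_cancel]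
    rfl
  rw [← hF] at hsum ⊢
  exact has_pointwise_sum_fourier_series_of_summable hsum x

end FourierCoeffOn

theorem tsum_inv_sq_nat_add_le {N : ℕ} (hN : 1 ≤ N) :
    ∑' i : ℕ, (((i + N : ℕ) : ℝ) ^ 2)⁻¹ ≤ 2 / N := by
  obtain ⟨N, rfl⟩ : ∃ N', N = N' + 1 := ⟨N - 1, by omega⟩
  refine Real.tsum_le_of_sum_range_le (fun _ => by positivity) fun M => ?_
  calc ∑ i ∈ Finset.range M, (((i + (N + 1) : ℕ) : ℝ) ^ 2)⁻¹
      = ∑ m ∈ Finset.Ioo N (N + 1 + M), ((m : ℝ) ^ 2)⁻¹ := by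
        rw [← Finset.Ico_add_one_left_eq_Ioo, Finset.sum_Ico_eq_sum_range, Nat.add_sub_cancel_left]
        simp only [add_comm]
    _ ≤ 2 / (N + 1) := sum_Ioo_inv_sq_le N (N + 1 + M)
    _ = 2 / ((N + 1 : ℕ) : ℝ) := by push_cast; rfl

theorem tsum_inv_pow_nat_add_le {N j : ℕ} (hN : 1 ≤ N) (hj : 2 ≤ j) :
    ∑' i : ℕ, (((i + N : ℕ) : ℝ) ^ j)⁻¹ ≤ 2 / (N : ℝ) ^ (j - 1) := by
  have hN0 : (0 : ℝ) < N := by exact_mod_cast hN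
  have hsq : Summable fun i : ℕ => (((i + N : ℕ) : ℝ) ^ 2)⁻¹ := by
    exact_mod_cast (summable_nat_add_iff N).mpr (Real.summable_nat_pow_inv.mpr one_lt_two)
  have hle : ∀ i : ℕ,
      (((i + N : ℕ) : ℝ) ^ j)⁻¹ ≤ ((N : ℝ) ^ (j - 2))⁻¹ * (((i + N : ℕ) : ℝ) ^ 2)⁻¹ := by
    intro i
    rw [← mul_inv, ← Nat.sub_add_cancel hj, pow_add, Nat.add_sub_cancel]
    gcongr
    exact_mod_cast Nat.le_add_left N i
  calc ∑' i : ℕ, (((i + N : ℕ) : ℝ) ^ j)⁻¹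
      ≤ ∑' i : ℕ, ((N : ℝ) ^ (j - 2))⁻¹ * (((i + N : ℕ) : ℝ) ^ 2)⁻¹ :=
        (hsq.mul_left _).of_nonneg_of_le (fun _ => by positivity) hle |>.tsum_le_tsum hle
          (hsq.mul_left _)
    _ = ((N : ℝ) ^ (j - 2))⁻¹ * ∑' i : ℕ, (((i + N : ℕ) : ℝ) ^ 2)⁻¹ := tsum_mul_left
    _ ≤ ((N : ℝ) ^ (j - 2))⁻¹ * (2 / N) := by gcongr; exact tsum_inv_sq_nat_add_le hN
    _ = 2 / (N : ℝ) ^ (j - 1) := by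
        rw [show j - 1 = j - 2 + 1 by omega, pow_succ]
        field_simp

theorem abs_sub_sum_range_le_of_hasSum {T : ℕ → ℝ} {x C : ℝ} {j N : ℕ} (hT : HasSum T x)
    (hTle : ∀ n, N ≤ n → |T n| ≤ C / (n : ℝ) ^ j) (hj : 2 ≤ j) (hN : 1 ≤ N) :
    |x - ∑ n ∈ Finset.range N, T n| ≤ 2 * C / (N : ℝ) ^ (j - 1) := by
  have hN0 : (0 : ℝ) < N := by exact_mod_cast hN
  have hC : 0 ≤ C := by
    simpa using (le_div_iff₀ (pow_pos hN0 j)).mp ((abs_nonneg _).trans (hTle N le_rfl))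
  have htail := (hasSum_nat_add_iff' N).mpr hT
  have hsum : Summable fun i : ℕ => (((i + N : ℕ) : ℝ) ^ j)⁻¹ := by
    exact_mod_cast (summable_nat_add_iff N).mpr (Real.summable_nat_pow_inv.mpr (by omega))
  calc |x - ∑ n ∈ Finset.range N, T n|
      ≤ ∑' i : ℕ, C * (((i + N : ℕ) : ℝ) ^ j)⁻¹ :=
        htail.norm_le_of_bounded (hsum.mul_left C).hasSum fun i => hTle _ (Nat.le_add_left N i)
    _ = C * ∑' i : ℕ, (((i + N : ℕ) : ℝ) ^ j)⁻¹ := tsum_mul_left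
    _ ≤ C * (2 / (N : ℝ) ^ (j - 1)) := by gcongr; exact tsum_inv_pow_nat_add_le hN hj
    _ = 2 * C / (N : ℝ) ^ (j - 1) := by ring

theorem periodic_mul_sin_sub {u : ℝ → ℝ} (hper : Function.Periodic u 1) (n : ℕ) (s : ℝ) :
    Function.Periodic (fun r => u r * sin (2 * π * n * (s - r))) 1 := fun r => by
  simp only [hper r, mul_sub, mul_one, sub_add_eq_sub_sub]
  rw [show 2 * π * n = (n : ℕ) * (2 * π) by ring, Real.sin_sub_nat_mul_two_pi]

theorem fourierCoeffOn_mul_exp_sub_neg {u : ℝ → ℝ} (hu : Continuous u)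
    (hper : Function.Periodic u 1) (n : ℕ) (s : ℝ) :
    fourierCoeffOn zero_lt_one (fun x => ((u x : ℝ) : ℂ)) n *
          Complex.exp (2 * π * Complex.I * n * s) -
        fourierCoeffOn zero_lt_one (fun x => ((u x : ℝ) : ℂ)) (-n) *
          Complex.exp (2 * π * Complex.I * (-n : ℤ) * s) =
      2 * Complex.I * ((∫ r in (s - 1)..s, u r * sin (2 * π * n * (s - r)) : ℝ) : ℂ) := by
  have hshift : ∫ x in (0 : ℝ)..1, u x * sin (2 * π * n * (s - x)) =
      ∫ r in (s - 1)..s, u r * sin (2 * π * n * (s - r)) := by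
    simpa using (periodic_mul_sin_sub hper n s).intervalIntegral_add_eq 0 (s - 1)
  have hint : ∀ m : ℤ, IntervalIntegrable
      (fun x : ℝ => Complex.exp (2 * π * Complex.I * m * x) * (u x : ℂ)) volume 0 1 := fun m =>
    Continuous.intervalIntegrable (by fun_prop) 0 1
  simp only [fourierCoeffOn_eq_integral, fourier_coe_apply, sub_zero, Complex.ofReal_one, div_one,
    one_smul, smul_eq_mul, neg_neg]
  rw [← intervalIntegral.integral_mul_const, ← intervalIntegral.integral_mul_const,
    ← intervalIntegral.integral_sub ((hint _).mul_const _) ((hint _).mul_const _), ← hshift,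
    ← intervalIntegral.integral_ofReal, ← intervalIntegral.integral_const_mul]
  refine intervalIntegral.integral_congr fun x _ => ?_
  have e1 := Complex.exp_mul_I (2 * π * n * (s - x))
  have e2 := Complex.exp_mul_I (-(2 * π * n * (s - x)))
  rw [Complex.cos_neg, Complex.sin_neg] at e2
  simp only [mul_right_comm _ (u x : ℂ), ← Complex.exp_add]
  push_cast
  rw [show 2 * π * Complex.I * -n * x + 2 * π * Complex.I * n * s =
      2 * π * n * (s - x) * Complex.I by ring,
    show 2 * π * Complex.I * n * x + 2 * π * Complex.I * -n * s =
      -(2 * π * n * (s - x)) * Complex.I by ring, e1, e2]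
  ring

/-- The paper's `x_n^s(s)`. -/
noncomputable def sineCoeff (u : ℝ → ℝ) (n : ℕ) (s : ℝ) : ℝ :=
  √2 * ∫ r in (s - 1)..s, u r * sin (2 * π * n * (s - r))

/-- The paper's `u̇_N(s)`; the summand `n = 0` vanishes, so this is the sum over `1 ≤ n ≤ N - 1`. -/
noncomputable def derivEstimator (u : ℝ → ℝ) (N : ℕ) (s : ℝ) : ℝ :=
  -(2 * √2 * π) * ∑ n ∈ Finset.range N, (n : ℝ) * sineCoeff u n s

theorem continuous_sineCoeff {u : ℝ → ℝ} (hu : Continuous u) (n : ℕ) :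
    Continuous (sineCoeff u n) := by
  have hF : Continuous fun p : ℝ × ℝ => u p.2 * sin (2 * π * n * (p.1 - p.2)) := by fun_prop
  have hsplit : ∀ s : ℝ, ∫ r in (s - 1)..s, u r * sin (2 * π * n * (s - r)) =
      (∫ r in (0 : ℝ)..s, u r * sin (2 * π * n * (s - r))) -
        ∫ r in (0 : ℝ)..(s - 1), u r * sin (2 * π * n * (s - r)) := fun s =>
    (intervalIntegral.integral_interval_sub_left (Continuous.intervalIntegrable (by fun_prop) _ _)
      (Continuous.intervalIntegrable (by fun_prop) _ _)).symm
  unfold sineCoeff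
  simp_rw [hsplit]
  exact continuous_const.mul
    ((intervalIntegral.continuous_parametric_intervalIntegral_of_continuous hF continuous_id).sub
      (intervalIntegral.continuous_parametric_intervalIntegral_of_continuous hF
        (continuous_id.sub continuous_const)))

theorem continuous_derivEstimator {u : ℝ → ℝ} (hu : Continuous u) (N : ℕ) :
    Continuous (derivEstimator u N) :=
  continuous_const.mul (continuous_finsetSum _ fun n _ =>
    continuous_const.mul (continuous_sineCoeff hu n))

theorem fourierCoeffOn_deriv_pair_eq {u : ℝ → ℝ} (hu : ContDiff ℝ 1 u)
    (hper : Function.Periodic u 1) (n : ℕ) (s : ℝ) :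
    fourierCoeffOn zero_lt_one (fun x => ((deriv u x : ℝ) : ℂ)) n *
          Complex.exp (2 * π * Complex.I * n * s) +
        fourierCoeffOn zero_lt_one (fun x => ((deriv u x : ℝ) : ℂ)) (-n) *
          Complex.exp (2 * π * Complex.I * (-n : ℤ) * s) =
      ((-(2 * √2 * π) * (n * sineCoeff u n s) : ℝ) : ℂ) := by
  have hper' : Function.Periodic u (1 - 0) := by simpa using hper
  have h22 : (√2 : ℂ) * √2 = 2 := by exact_mod_cast Real.mul_self_sqrt zero_le_two
  simp only [fourierCoeffOn_deriv zero_lt_one hu hper', Complex.ofReal_one, Complex.ofReal_zero,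
    sub_zero, div_one, sineCoeff]
  have h := fourierCoeffOn_mul_exp_sub_neg hu.continuous hper n s
  set J : ℂ := ((∫ r in (s - 1)..s, u r * sin (2 * π * n * (s - r)) : ℝ) : ℂ)
  push_cast at h ⊢
  linear_combination (2 * π * Complex.I * n) * h + (4 * π * n * J) * Complex.I_sq +
    (2 * π * n * J) * h22

-- At `m = 0` the right-hand side is `0` for `k ≥ 2`: the bound then says that `u'` has mean zero.
theorem norm_fourierCoeffOn_deriv_le {k : ℕ} {u : ℝ → ℝ} {L : ℝ} (hk : 1 ≤ k)
    (hu : ContDiff ℝ k u) (hper : Function.Periodic u 1)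
    (hb : ∀ s, |iteratedDeriv k u s| ≤ L) (m : ℤ) :
    ‖fourierCoeffOn zero_lt_one (fun x => ((deriv u x : ℝ) : ℂ)) m‖ ≤ L / |(m : ℝ)| ^ (k - 1) := by
  have hper' : Function.Periodic u (1 - 0) := by simpa using hper
  have hnorm : ‖2 * π * Complex.I * m‖ = 2 * π * |(m : ℝ)| := by
    simp [abs_of_pos pi_pos]
  have hdecay : ‖fourierCoeffOn zero_lt_one (fun x => ((u x : ℝ) : ℂ)) m‖ *
      (2 * π * |(m : ℝ)|) ^ k ≤ L := by
    have := norm_fourierCoeffOn_le zero_lt_one (f := fun x => ((iteratedDeriv k u x : ℝ) : ℂ))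
      (fun x _ => by simpa using hb x) m
    rwa [fourierCoeffOn_iteratedDeriv zero_lt_one hu hper', norm_mul, norm_pow,
      Complex.ofReal_one, Complex.ofReal_zero, sub_zero, div_one, hnorm, mul_comm] at this
  rw [fourierCoeffOn_deriv zero_lt_one (hu.of_le (by exact_mod_cast hk)) hper',
    Complex.ofReal_one, Complex.ofReal_zero, sub_zero, div_one, norm_mul, hnorm]
  rcases eq_or_ne m 0 with rfl | hm
  · simpa using div_nonneg ((abs_nonneg _).trans (hb 0)) (pow_nonneg le_rfl (k - 1))
  rw [le_div_iff₀ (by positivity)]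
  calc 2 * π * |(m : ℝ)| * ‖fourierCoeffOn zero_lt_one (fun x => ((u x : ℝ) : ℂ)) m‖ *
        |(m : ℝ)| ^ (k - 1)
      ≤ 2 * π * |(m : ℝ)| * ‖fourierCoeffOn zero_lt_one (fun x => ((u x : ℝ) : ℂ)) m‖ *
        (2 * π * |(m : ℝ)|) ^ (k - 1) := by
        gcongr
        nlinarith [pi_gt_three, abs_nonneg (m : ℝ)]
    _ = ‖fourierCoeffOn zero_lt_one (fun x => ((u x : ℝ) : ℂ)) m‖ * (2 * π * |(m : ℝ)|) ^ k := by
        rw [← Nat.sub_add_cancel hk, pow_succ, Nat.add_sub_cancel]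
        ring
    _ ≤ L := hdecay

theorem abs_mul_sineCoeff_le {k : ℕ} {u : ℝ → ℝ} {L : ℝ} (hk : 1 ≤ k)
    (hu : ContDiff ℝ k u) (hper : Function.Periodic u 1)
    (hb : ∀ s, |iteratedDeriv k u s| ≤ L) (n : ℕ) (s : ℝ) :
    |-(2 * √2 * π) * (n * sineCoeff u n s)| ≤ 2 * L / (n : ℝ) ^ (k - 1) := by
  have hexp : ∀ m : ℤ, ‖Complex.exp (2 * π * Complex.I * m * s)‖ = 1 := fun m => by
    rw [show 2 * π * Complex.I * m * s = ((2 * π * m * s : ℝ) : ℂ) * Complex.I by push_cast; ring,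
      Complex.norm_exp_ofReal_mul_I]
  have hg := norm_fourierCoeffOn_deriv_le hk hu hper hb
  rw [← Real.norm_eq_abs, ← Complex.norm_real,
    ← fourierCoeffOn_deriv_pair_eq (hu.of_le (by exact_mod_cast hk)) hper]
  calc _ ≤ _ := norm_add_le _ _
    _ ≤ L / |((n : ℤ) : ℝ)| ^ (k - 1) + L / |((-n : ℤ) : ℝ)| ^ (k - 1) := by
        rw [norm_mul, norm_mul, ← Int.cast_natCast (R := ℂ) n, hexp, hexp, mul_one, mul_one]
        exact add_le_add (hg n) (hg (-n))
    _ = 2 * L / (n : ℝ) ^ (k - 1) := by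
        push_cast
        rw [abs_neg, Nat.abs_cast]
        ring

theorem hasSum_mul_sineCoeff {k : ℕ} {u : ℝ → ℝ} {L : ℝ} (hk : 3 ≤ k)
    (hu : ContDiff ℝ k u) (hper : Function.Periodic u 1)
    (hb : ∀ s, |iteratedDeriv k u s| ≤ L) (s : ℝ) :
    HasSum (fun n : ℕ => -(2 * √2 * π) * (n * sineCoeff u n s)) (deriv u s) := by
  have hu1 : ContDiff ℝ 1 u := hu.of_le (by exact_mod_cast (by omega : 1 ≤ k))
  have hsum : Summable (fourierCoeffOn zero_lt_one (fun x => ((deriv u x : ℝ) : ℂ))) := by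
    refine .of_norm_bounded (.mul_left L ?_) (norm_fourierCoeffOn_deriv_le (by omega) hu hper hb)
    refine (summable_abs_iff.mpr (summable_one_div_int_pow.mpr (by omega : 1 < k - 1))).congr ?_
    intro m
    simp [abs_pow]
  have hseries := (hasSum_fourierCoeffOn_smul_fourier zero_lt_one
    (f := fun x => ((deriv u x : ℝ) : ℂ))
    (Complex.continuous_ofReal.comp (hu1.continuous_deriv le_rfl))
    (fun x => by simpa using congrArg Complex.ofReal (hper.deriv x)) hsum s).nat_add_neg
  have hg0 : fourierCoeffOn zero_lt_one (fun x => ((deriv u x : ℝ) : ℂ)) 0 = 0 := by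
    simp [fourierCoeffOn_deriv zero_lt_one hu1 (by simpa using hper)]
  simp only [fourier_coe_apply, smul_eq_mul, Complex.ofReal_one, sub_zero, div_one,
    Int.cast_natCast, hg0, zero_mul, add_zero, fourierCoeffOn_deriv_pair_eq hu1 hper] at hseries
  exact Complex.hasSum_ofReal.mp hseries

theorem abs_deriv_sub_derivEstimator_le {k N : ℕ} {u : ℝ → ℝ} {L : ℝ} (hk : 3 ≤ k) (hN : 1 ≤ N)
    (hu : ContDiff ℝ k u) (hper : Function.Periodic u 1)
    (hb : ∀ s, |iteratedDeriv k u s| ≤ L) (s : ℝ) :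
    |deriv u s - derivEstimator u N s| ≤ 4 * L / (N : ℝ) ^ (k - 2) := by
  have h := abs_sub_sum_range_le_of_hasSum (hasSum_mul_sineCoeff hk hu hper hb s)
    (fun n _ => abs_mul_sineCoeff_le (by omega) hu hper hb n s) (by omega : 2 ≤ k - 1) hN
  rwa [derivEstimator, Finset.mul_sum, show k - 2 = k - 1 - 1 by omega,
    show 4 * L = 2 * (2 * L) by ring]

/-- Corollary on the integrated approximation error: for every `k ≥ 3` there is a
constant `C > 0`, depending only on `k`, such that for all `t ≥ 0`, `L ≥ 0`, `N ≥ 1`,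
and every `k`-times continuously differentiable 1-periodic `u` with `|u^{(k)}| ≤ L`,
the integrated estimator `u_N(t) = ∫_0^t u̇_N(s) ds`, where
`u̇_N(s) = −2√2π Σ_{n=1}^{N−1} n·x_n^s(s)` and
`x_n^s(s) = √2 ∫_{s-1}^s u(r) sin(2πn(s-r)) dr`, satisfies
`|(u(t) − u(0)) − u_N(t)| ≤ C · L · t / N^{k−2}`. -/
theorem stmt_11 (k : ℕ) (hk : 3 ≤ k) :
    ∃ C : ℝ, 0 < C ∧
      ∀ t : ℝ, 0 ≤ t → ∀ L : ℝ, 0 ≤ L → ∀ N : ℕ, 1 ≤ N → ∀ u : ℝ → ℝ,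
        ContDiff ℝ k u → (∀ s : ℝ, u (s + 1) = u s) →
        (∀ s : ℝ, |iteratedDeriv k u s| ≤ L) →
        |(u t - u 0) -
            ∫ s in (0 : ℝ)..t,
              -(2 * Real.sqrt 2 * π) *
                ∑ n ∈ Finset.range N,
                  (n : ℝ) *
                    (Real.sqrt 2 * ∫ r in (s - 1)..s, u r * Real.sin (2 * π * n * (s - r)))| ≤
          C * L * t / (N : ℝ) ^ (k - 2) := by
  refine ⟨4, four_pos, fun t ht L _ N hN u hu hper hb => ?_⟩
  change |(u t - u 0) - ∫ s in (0 : ℝ)..t, derivEstimator u N s| ≤ _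
  have hu1 : ContDiff ℝ 1 u := hu.of_le (by exact_mod_cast (by omega : 1 ≤ k))
  have hderiv := (hu1.continuous_deriv le_rfl).intervalIntegrable (μ := volume) 0 t
  have hest := (continuous_derivEstimator hu.continuous N).intervalIntegrable (μ := volume) 0 t
  rw [← intervalIntegral.integral_deriv_eq_sub (fun x _ => hu1.differentiable one_ne_zero x) hderiv,
    ← intervalIntegral.integral_sub hderiv hest, ← Real.norm_eq_abs]
  calc _ ≤ 4 * L / (N : ℝ) ^ (k - 2) * |t - 0| :=
        intervalIntegral.norm_integral_le_of_norm_le_const fun s _ =>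
          abs_deriv_sub_derivEstimator_le hk hN hu hper hb s
    _ = 4 * L * t / (N : ℝ) ^ (k - 2) := by rw [sub_zero, abs_of_nonneg ht]; ring
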